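/- arXiv:2405.04026 — 4 statements merged into one kernel-verified Lean document; each statement's English description precedes it below -/
import Mathlib

section
/- The federated Bellman operator T_fed defined by T_fed(Q)(s,a) = (1/N(s)) Σ_{k=1}^N T_k(Q)(s,a)·1_k(s), where T_k(Q) equals the optimal Q function of the local augmented MDP with terminal values V(s) = max_a Q(s,a) outside S_k, has the global optimal Q function Q* as its unique fixed point, provided T_fed is a contraction with modulus γ_fed < 1. -/
lemma abs_sup'_sub_sup'_le {ι : Type*} (s : Finset ι) (hs : s.Nonempty) (f g : ι → ℝ) :
    |s.sup' hs f - s.sup' hs g| ≤ s.sup' hs (fun i => |f i - g i|) := by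
  rw [abs_sub_le_iff]
  constructor <;>
  · rw [sub_le_iff_le_add]
    apply Finset.sup'_le
    intro i hi
    have h1 := Finset.le_sup' (fun i => |f i - g i|) hi
    have h2f := Finset.le_sup' f hi
    have h2g := Finset.le_sup' g hi
    nlinarith [le_abs_self (f i - g i), neg_abs_le (f i - g i)]

theorem federated_bellman_unique_fixed_point
    {S A : Type*} [Fintype S] [Fintype A] [Nonempty S] [Nonempty A] [DecidableEq S]
    (P : S × A → S → ℝ) (R : S × A → ℝ) (γ : ℝ) (hγ0 : 0 < γ) (hγ1 : γ < 1)
    (hP0 : ∀ sa s', 0 ≤ P sa s') (hP1 : ∀ sa, ∑ s', P sa s' = 1)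
    (N : ℕ) [Nonempty (Fin N)]
    (Sk : Fin N → Finset S) (hcover : ∀ s : S, ∃ k, s ∈ Sk k)
    (Tk : Fin N → (S × A → ℝ) → (S × A → ℝ))
    (hTk : ∀ k (Q : S × A → ℝ) (s : S) (a : A), s ∈ Sk k →
      Tk k Q (s, a) = R (s, a) + γ * ∑ s', P (s, a) s' *
        (if s' ∈ Sk k then
            Finset.univ.sup' Finset.univ_nonempty (fun a' => Tk k Q (s', a'))
         else Finset.univ.sup' Finset.univ_nonempty (fun a' => Q (s', a'))))
    (Tfed : (S × A → ℝ) → (S × A → ℝ))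
    (hTfed : ∀ Q (s : S) (a : A),
      Tfed Q (s, a) = (1 / (∑ k, if s ∈ Sk k then (1 : ℝ) else 0)) *
        ∑ k, (if s ∈ Sk k then Tk k Q (s, a) else 0))
    (γfed : ℝ) (hγfed0 : 0 ≤ γfed) (hγfed1 : γfed < 1)
    (hcontr : ∀ Q₁ Q₂ : S × A → ℝ,
      Finset.univ.sup' Finset.univ_nonempty (fun sa => |Tfed Q₁ sa - Tfed Q₂ sa|) ≤
        γfed * Finset.univ.sup' Finset.univ_nonempty (fun sa => |Q₁ sa - Q₂ sa|))
    (Qstar : S × A → ℝ)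
    (hQstar : ∀ sa : S × A, Qstar sa = R sa + γ * ∑ s', P sa s' *
        Finset.univ.sup' Finset.univ_nonempty (fun a' => Qstar (s', a'))) :
    Tfed Qstar = Qstar ∧ ∀ Q : S × A → ℝ, Tfed Q = Q → Q = Qstar := by
  classical
  -- Step 1: Tk k Qstar agrees with Qstar on Sk k
  have hlocal : ∀ k : Fin N, ∀ s ∈ Sk k, ∀ a : A, Tk k Qstar (s, a) = Qstar (s, a) := by
    intro k s₀ hs₀ a₀
    have hne : ((Sk k) ×ˢ (Finset.univ : Finset A)).Nonempty :=
      ⟨(s₀, a₀), Finset.mem_product.mpr ⟨hs₀, Finset.mem_univ _⟩⟩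
    set D := (Sk k) ×ˢ (Finset.univ : Finset A) with hD
    set M := D.sup' hne (fun sa => |Tk k Qstar sa - Qstar sa|) with hM
    have hM0 : 0 ≤ M := by
      refine le_trans (abs_nonneg (Tk k Qstar (s₀, a₀) - Qstar (s₀, a₀))) ?_
      exact Finset.le_sup' (fun sa => |Tk k Qstar sa - Qstar sa|)
        (Finset.mem_product.mpr ⟨hs₀, Finset.mem_univ a₀⟩)
    have key : ∀ s ∈ Sk k, ∀ a : A, |Tk k Qstar (s, a) - Qstar (s, a)| ≤ γ * M := by
      intro s hs a
      have hdiff : Tk k Qstar (s, a) - Qstar (s, a) =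
          γ * ∑ s', P (s, a) s' *
            ((if s' ∈ Sk k then
                Finset.univ.sup' Finset.univ_nonempty (fun a' => Tk k Qstar (s', a'))
              else Finset.univ.sup' Finset.univ_nonempty (fun a' => Qstar (s', a'))) -
             Finset.univ.sup' Finset.univ_nonempty (fun a' => Qstar (s', a'))) := by
        rw [hTk k Qstar s a hs, hQstar (s, a)]
        rw [Finset.mul_sum, Finset.mul_sum, Finset.mul_sum]
        rw [add_sub_add_left_eq_sub, ← Finset.sum_sub_distrib]
        congr 1; ext s'; ring
      rw [hdiff, abs_mul, abs_of_pos hγ0]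
      have hbnd : |∑ s', P (s, a) s' *
            ((if s' ∈ Sk k then
                Finset.univ.sup' Finset.univ_nonempty (fun a' => Tk k Qstar (s', a'))
              else Finset.univ.sup' Finset.univ_nonempty (fun a' => Qstar (s', a'))) -
             Finset.univ.sup' Finset.univ_nonempty (fun a' => Qstar (s', a')))| ≤ M := by
        calc _ ≤ ∑ s', |P (s, a) s' * _| := Finset.abs_sum_le_sum_abs _ _
          _ ≤ ∑ s', P (s, a) s' * M := by
              apply Finset.sum_le_sum
              intro s' _
              rw [abs_mul, abs_of_nonneg (hP0 (s, a) s')]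
              apply mul_le_mul_of_nonneg_left _ (hP0 (s, a) s')
              by_cases hs' : s' ∈ Sk k
              · simp only [hs', if_true]
                refine le_trans (abs_sup'_sub_sup'_le _ _ _ _) ?_
                apply Finset.sup'_le
                intro a' _
                exact Finset.le_sup' (fun sa => |Tk k Qstar sa - Qstar sa|)
                  (Finset.mem_product.mpr ⟨hs', Finset.mem_univ a'⟩)
              · simp [hs', hM0]
          _ = M := by rw [← Finset.sum_mul, hP1, one_mul]
      calc γ * |_| ≤ γ * M := by exact mul_le_mul_of_nonneg_left hbnd hγ0.le
        _ = γ * M := rfl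
    have hMle : M ≤ γ * M := by
      apply Finset.sup'_le
      intro sa hsa
      obtain ⟨hs, _⟩ := Finset.mem_product.mp hsa
      exact key sa.1 hs sa.2
    have hMzero : M ≤ 0 := by nlinarith
    have : |Tk k Qstar (s₀, a₀) - Qstar (s₀, a₀)| ≤ 0 :=
      le_trans (Finset.le_sup' (fun sa => |Tk k Qstar sa - Qstar sa|)
        (Finset.mem_product.mpr ⟨hs₀, Finset.mem_univ a₀⟩)) hMzero
    have := abs_nonpos_iff.mp this
    linarith [sub_eq_zero.mp this]
  -- Step 2: Tfed Qstar = Qstar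
  have hfix : Tfed Qstar = Qstar := by
    funext sa
    obtain ⟨s, a⟩ := sa
    rw [hTfed Qstar s a]
    have hcount : (0:ℝ) < ∑ k, if s ∈ Sk k then (1 : ℝ) else 0 := by
      obtain ⟨k0, hk0⟩ := hcover s
      apply Finset.sum_pos' (fun k _ => by positivity)
      exact ⟨k0, Finset.mem_univ k0, by simp [hk0]⟩
    have hsum : (∑ k, if s ∈ Sk k then Tk k Qstar (s, a) else 0) =
        (∑ k, if s ∈ Sk k then (1:ℝ) else 0) * Qstar (s, a) := by
      rw [Finset.sum_mul]
      apply Finset.sum_congr rfl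
      intro k _
      by_cases hk : s ∈ Sk k
      · simp [hk, hlocal k s hk a]
      · simp [hk]
    rw [hsum, ← mul_assoc, one_div, inv_mul_cancel₀ hcount.ne', one_mul]
  refine ⟨hfix, ?_⟩
  -- Step 3: uniqueness
  intro Q hQ
  have h := hcontr Q Qstar
  rw [hQ, hfix] at h
  set M := Finset.univ.sup' Finset.univ_nonempty (fun sa => |Q sa - Qstar sa|) with hM
  have hM0 : 0 ≤ M := by
    refine le_trans (abs_nonneg (Q (Classical.arbitrary (S × A)) - Qstar (Classical.arbitrary (S × A)))) ?_
    exact Finset.le_sup' (fun sa => |Q sa - Qstar sa|) (Finset.mem_univ _)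
  have hMzero : M ≤ 0 := by nlinarith
  funext sa
  have : |Q sa - Qstar sa| ≤ 0 :=
    le_trans (Finset.le_sup' (fun sa => |Q sa - Qstar sa|) (Finset.mem_univ sa)) hMzero
  have := abs_nonpos_iff.mp this
  linarith [sub_eq_zero.mp this]
end

section
/- Suppose a sequence of operators T̃_n on ℝ^{S_k×A} satisfies, for n ≥ 2, ‖T̃_n(Q₁) − T̃_n(Q₂)‖_{S_k} ≤ γ(1−p)‖T̃_{n−1}(Q₁) − T̃_{n−1}(Q₂)‖_{S_k} + γp‖Q₁ − Q₂‖_∞, with base case ‖T̃₁(Q₁) − T̃₁(Q₂)‖_{S_k} ≤ γ‖Q₁ − Q₂‖_∞. Then for all n ≥ 1, ‖T̃_n(Q₁) − T̃_n(Q₂)‖_{S_k} ≤ γ[(γ(1−p))^{n−1} + p(1−(γ(1−p))^{n−1})/(1−γ(1−p))]·‖Q₁ − Q₂‖_∞. -/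
theorem n_step_local_contraction
    {S A : Type*} [Fintype S] [Fintype A] [Nonempty S] [Nonempty A]
    (Sk : Finset S) (hSk : (Sk ×ˢ (Finset.univ : Finset A)).Nonempty)
    (γ p : ℝ) (hγ0 : 0 < γ) (hγ1 : γ < 1) (hp0 : 0 < p) (hp1 : p ≤ 1)
    (T : ℕ → (S × A → ℝ) → (S × A → ℝ))
    (Q₁ Q₂ : S × A → ℝ)
    (hbase : (Sk ×ˢ (Finset.univ : Finset A)).sup' hSk
        (fun sa => |T 1 Q₁ sa - T 1 Q₂ sa|) ≤
      γ * Finset.univ.sup' Finset.univ_nonempty (fun sa => |Q₁ sa - Q₂ sa|))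
    (hrec : ∀ n : ℕ, 2 ≤ n →
      (Sk ×ˢ (Finset.univ : Finset A)).sup' hSk (fun sa => |T n Q₁ sa - T n Q₂ sa|) ≤
        γ * (1 - p) * (Sk ×ˢ (Finset.univ : Finset A)).sup' hSk
            (fun sa => |T (n - 1) Q₁ sa - T (n - 1) Q₂ sa|) +
        γ * p * Finset.univ.sup' Finset.univ_nonempty (fun sa => |Q₁ sa - Q₂ sa|)) :
    ∀ n : ℕ, 1 ≤ n →
      (Sk ×ˢ (Finset.univ : Finset A)).sup' hSk (fun sa => |T n Q₁ sa - T n Q₂ sa|) ≤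
        γ * ((γ * (1 - p)) ^ (n - 1) +
            p * (1 - (γ * (1 - p)) ^ (n - 1)) / (1 - γ * (1 - p))) *
          Finset.univ.sup' Finset.univ_nonempty (fun sa => |Q₁ sa - Q₂ sa|) := by
  have hq0 : 0 ≤ γ * (1 - p) := mul_nonneg hγ0.le (by linarith)
  have hq1 : γ * (1 - p) < 1 := by nlinarith
  have hqne : 1 - γ * (1 - p) ≠ 0 := by linarith
  set M := Finset.univ.sup' Finset.univ_nonempty (fun sa : S × A => |Q₁ sa - Q₂ sa|) with hM
  have hM0 : 0 ≤ M := by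
    obtain ⟨x, hx⟩ := (Finset.univ_nonempty : (Finset.univ : Finset (S × A)).Nonempty)
    exact le_trans (abs_nonneg (Q₁ x - Q₂ x))
      (Finset.le_sup' (fun sa => |Q₁ sa - Q₂ sa|) hx)
  intro n hn
  induction n, hn using Nat.le_induction with
  | base =>
    simpa using hbase
  | succ n hn ih =>
    have h := hrec (n + 1) (by omega)
    simp only [Nat.add_sub_cancel] at h ⊢
    obtain ⟨k, rfl⟩ : ∃ k, n = k + 1 := ⟨n - 1, by omega⟩
    simp only [Nat.add_sub_cancel] at ih
    calc (Sk ×ˢ (Finset.univ : Finset A)).sup' hSk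
          (fun sa => |T (k + 1 + 1) Q₁ sa - T (k + 1 + 1) Q₂ sa|)
        ≤ γ * (1 - p) * (Sk ×ˢ (Finset.univ : Finset A)).sup' hSk
            (fun sa => |T (k + 1) Q₁ sa - T (k + 1) Q₂ sa|) + γ * p * M := h
      _ ≤ γ * (1 - p) * (γ * ((γ * (1 - p)) ^ k +
            p * (1 - (γ * (1 - p)) ^ k) / (1 - γ * (1 - p))) * M) + γ * p * M := by
          have := mul_le_mul_of_nonneg_left ih hq0
          linarith
      _ = γ * ((γ * (1 - p)) ^ (k + 1) +
            p * (1 - (γ * (1 - p)) ^ (k + 1)) / (1 - γ * (1 - p))) * M := by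
          field_simp
          ring
end

section
/- Let γ ∈ (0,1), η ∈ (0,1), let D ≥ 0 and ρ ≥ 0, and suppose a sequence (d_m)_{m=0}^{E−1} of nonnegative reals satisfies d₀ ≤ D and, for 1 ≤ m ≤ E−1, d_m ≤ (1−η)^m D + ρ + ηγ Σ_{l=0}^{m−1} (1−η)^{m−1−l} d_l. If (1−η)^m ≥ 1/2 for all m ≤ E−1, then d_m ≤ D + 2ρ for all 0 ≤ m ≤ E−1. -/
theorem local_drift_induction_bound
    (γ η D ρ : ℝ) (hγ0 : 0 < γ) (hγ1 : γ < 1) (hη0 : 0 < η) (hη1 : η < 1)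
    (hD : 0 ≤ D) (hρ : 0 ≤ ρ)
    (E : ℕ) (d : ℕ → ℝ) (hd0' : ∀ m, 0 ≤ d m)
    (hd0 : d 0 ≤ D)
    (hrec : ∀ m : ℕ, 1 ≤ m → m ≤ E - 1 →
      d m ≤ (1 - η) ^ m * D + ρ + η * γ * ∑ l ∈ Finset.range m, (1 - η) ^ (m - 1 - l) * d l)
    (hpow : ∀ m : ℕ, m ≤ E - 1 → (1 / 2 : ℝ) ≤ (1 - η) ^ m) :
    ∀ m : ℕ, m ≤ E - 1 → d m ≤ D + 2 * ρ := by
  intro m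
  induction m using Nat.strong_induction_on with
  | _ m ih =>
    intro hm
    match m with
    | 0 => exact hd0.trans (by nlinarith)
    | Nat.succ n =>
      have hrec' := hrec (n + 1) (Nat.succ_le_succ (Nat.zero_le n)) hm
      have hx0 : 0 ≤ 1 - η := by linarith
      have hsum1 : ∑ l ∈ Finset.range (n + 1), (1 - η) ^ (n + 1 - 1 - l) * d l ≤
          ∑ l ∈ Finset.range (n + 1), (1 - η) ^ (n + 1 - 1 - l) * (D + 2 * ρ) := by
        apply Finset.sum_le_sum
        intro l hl
        have hl' : l < n + 1 := Finset.mem_range.mp hl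
        have hdl : d l ≤ D + 2 * ρ := ih l hl' (le_trans (le_of_lt hl') hm)
        exact mul_le_mul_of_nonneg_left hdl (pow_nonneg hx0 _)
      have hsum2 : ∑ l ∈ Finset.range (n + 1), (1 - η) ^ (n + 1 - 1 - l) * (D + 2 * ρ)
          = (D + 2 * ρ) * ((1 - (1 - η) ^ (n + 1)) / η) := by
        have href : ∑ l ∈ Finset.range (n + 1), (1 - η) ^ (n + 1 - 1 - l)
            = ∑ l ∈ Finset.range (n + 1), (1 - η) ^ l :=
          Finset.sum_range_reflect (fun l => (1 - η) ^ l) (n + 1)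
        have hne : (1 - η : ℝ) ≠ 1 := by intro h; nlinarith [sub_eq_iff_eq_add.mp h]
        have hgeom : ∑ l ∈ Finset.range (n + 1), (1 - η) ^ l
            = (1 - (1 - η) ^ (n + 1)) / η := by
          rw [geom_sum_eq hne, show (1 - η) - 1 = -η by ring, div_neg, ← neg_div, neg_sub]
        rw [← Finset.sum_mul, href, hgeom]
        ring
      have hp := hpow (n + 1) hm
      have hmul : η * γ * ∑ l ∈ Finset.range (n + 1), (1 - η) ^ (n + 1 - 1 - l) * d l ≤
          η * γ * ((D + 2 * ρ) * ((1 - (1 - η) ^ (n + 1)) / η)) := by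
        rw [← hsum2]
        exact mul_le_mul_of_nonneg_left hsum1 (by positivity)
      have hkey : η * γ * ((D + 2 * ρ) * ((1 - (1 - η) ^ (n + 1)) / η))
          = γ * (D + 2 * ρ) * (1 - (1 - η) ^ (n + 1)) := by
        field_simp
      rw [hkey] at hmul
      set P := (1 - η) ^ (n + 1) with hP
      have h1 : P ≤ 1 := pow_le_one₀ hx0 (by linarith)
      have hA : 0 ≤ (1 - γ) * ((D + 2 * ρ) * (1 - P)) :=
        mul_nonneg (by linarith) (mul_nonneg (by linarith) (by linarith))
      have hB : 0 ≤ ρ * (2 * P - 1) := mul_nonneg hρ (by linarith)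
      nlinarith [hrec', hmul, hA, hB, mul_nonneg hD (by linarith : 0 ≤ 1 - P)]
end

section
/- Let T be a γ_fed-contraction on ℝ^{S×A} (sup norm) with unique fixed point Q*, and let (Q_r) be defined by inexact iteration ‖Q_r − T(Q_{r−1})‖_∞ ≤ ε with constant ε = (ε₀/2)(1 − γ_fed), starting from ‖Q* − Q₀‖_∞ ≤ 1/(1−γ). Then for any R ≥ log(2/(ε₀(1−γ))) / log(1/γ_fed), one has ‖Q* − Q_R‖_∞ ≤ ε₀. -/
theorem inexact_contraction_iteration_count
    {ι : Type*} [Fintype ι] [Nonempty ι]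
    (γ γfed ε₀ : ℝ) (hγ0 : 0 < γ) (hγ1 : γ < 1) (hγfed0 : 0 < γfed) (hγfed1 : γfed < 1)
    (hε₀ : 0 < ε₀) (hε₀' : ε₀ < 1 / (1 - γ))
    (T : (ι → ℝ) → (ι → ℝ)) (Qstar : ι → ℝ)
    (hcontr : ∀ x y : ι → ℝ, ‖T x - T y‖ ≤ γfed * ‖x - y‖)
    (hfix : T Qstar = Qstar)
    (Q : ℕ → (ι → ℝ))
    (h0 : ‖Qstar - Q 0‖ ≤ 1 / (1 - γ))
    (hiter : ∀ r : ℕ, 1 ≤ r → ‖Q r - T (Q (r - 1))‖ ≤ ε₀ / 2 * (1 - γfed)) :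
    ∀ R : ℕ, Real.log (2 / (ε₀ * (1 - γ))) / Real.log (1 / γfed) ≤ R →
      ‖Qstar - Q R‖ ≤ ε₀ := by
  have hγ1' : 0 < 1 - γ := by linarith
  -- key recursion bound
  have key : ∀ r : ℕ, ‖Qstar - Q r‖ ≤ γfed ^ r * (1 / (1 - γ)) + ε₀ / 2 := by
    intro r
    induction r with
    | zero =>
      simp only [pow_zero, one_mul]
      linarith
    | succ n ih =>
      have h1 : ‖Q (n + 1) - T (Q n)‖ ≤ ε₀ / 2 * (1 - γfed) := by
        simpa using hiter (n + 1) (Nat.le_add_left 1 n)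
      have h2 : ‖Qstar - T (Q n)‖ ≤ γfed * ‖Qstar - Q n‖ := by
        calc ‖Qstar - T (Q n)‖ = ‖T Qstar - T (Q n)‖ := by rw [hfix]
          _ ≤ γfed * ‖Qstar - Q n‖ := hcontr _ _
      have htri : ‖Qstar - Q (n + 1)‖ ≤ ‖Qstar - T (Q n)‖ + ‖Q (n + 1) - T (Q n)‖ := by
        have := norm_sub_le_norm_sub_add_norm_sub Qstar (T (Q n)) (Q (n + 1))
        simpa [norm_sub_rev] using this
      have h3 : γfed * ‖Qstar - Q n‖ ≤ γfed * (γfed ^ n * (1 / (1 - γ)) + ε₀ / 2) :=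
        mul_le_mul_of_nonneg_left ih hγfed0.le
      calc ‖Qstar - Q (n + 1)‖ ≤ ‖Qstar - T (Q n)‖ + ‖Q (n + 1) - T (Q n)‖ := htri
        _ ≤ γfed * ‖Qstar - Q n‖ + ε₀ / 2 * (1 - γfed) := add_le_add h2 h1
        _ ≤ γfed * (γfed ^ n * (1 / (1 - γ)) + ε₀ / 2) + ε₀ / 2 * (1 - γfed) := by linarith
        _ = γfed ^ (n + 1) * (1 / (1 - γ)) + ε₀ / 2 := by ring
  intro R hR
  -- from the log condition, γfed ^ R ≤ ε₀ * (1 - γ) / 2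
  have hc : (1 : ℝ) < 2 / (ε₀ * (1 - γ)) := by
    have h : ε₀ * (1 - γ) < 1 := by
      have := (lt_div_iff₀ hγ1').mp hε₀'
      linarith
    rw [lt_div_iff₀ (by positivity)]
    linarith
  have hlogpos : 0 < Real.log (1 / γfed) := by
    apply Real.log_pos
    rw [lt_div_iff₀ hγfed0]; linarith
  have hRlog : Real.log (2 / (ε₀ * (1 - γ))) ≤ R * Real.log (1 / γfed) := by
    rw [div_le_iff₀ hlogpos] at hR
    linarith
  have hpow : γfed ^ R ≤ ε₀ * (1 - γ) / 2 := by
    have hlog1 : Real.log (1 / γfed) = -Real.log γfed := by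
      rw [Real.log_div one_ne_zero (ne_of_gt hγfed0), Real.log_one]; ring
    have hlog2 : Real.log (2 / (ε₀ * (1 - γ))) = -Real.log (ε₀ * (1 - γ) / 2) := by
      rw [Real.log_div (by norm_num) (by positivity), Real.log_div (by positivity) (by norm_num)]
      ring
    have : Real.log (γfed ^ R) ≤ Real.log (ε₀ * (1 - γ) / 2) := by
      rw [Real.log_pow]
      rw [hlog1, hlog2] at hRlog
      push_cast
      linarith
    have hexp := Real.exp_le_exp.mpr this
    rwa [Real.exp_log (by positivity), Real.exp_log (by positivity)] at hexp
  have hfinal : γfed ^ R * (1 / (1 - γ)) ≤ ε₀ / 2 := by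
    rw [mul_one_div, div_le_div_iff₀ hγ1' (by norm_num : (0:ℝ) < 2)]
    calc γfed ^ R * 2 ≤ ε₀ * (1 - γ) / 2 * 2 := by linarith
      _ = ε₀ * (1 - γ) := by ring
  calc ‖Qstar - Q R‖ ≤ γfed ^ R * (1 / (1 - γ)) + ε₀ / 2 := key R
    _ ≤ ε₀ / 2 + ε₀ / 2 := by linarith
    _ = ε₀ := by ring
end
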